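/- arXiv:math/0411235 — 5 statements merged into one kernel-verified Lean document; each statement's English description precedes it below -/
import Mathlib

section
/- For the deformed bidouble cover B = A[z,w]/(z² - v - aw, w² - u - bz), the multiplication-by-zw operator on the free A-module B with basis 1, z, w, zw is represented by the matrix M_{zw} with rows (0, au, bv, uv), (0, ab, u, bv), (0, v, ab, au), (1, 0, 0, ab), and 4⁴·det(M_{zw} - (ab/4)·Id) = -16²·(-u²v² - (9/8)uv(ab)² + b²v³ + a²u³ + (27/256)a⁴b⁴). -/
open MvPolynomial in
private theorem det_fin_four' {A : Type*} [CommRing A] (M : Matrix (Fin 4) (Fin 4) A) :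
    M.det =
      M 0 0 * (M 1 1 * M 2 2 * M 3 3 - M 1 1 * M 2 3 * M 3 2 - M 1 2 * M 2 1 * M 3 3
        + M 1 2 * M 2 3 * M 3 1 + M 1 3 * M 2 1 * M 3 2 - M 1 3 * M 2 2 * M 3 1)
      - M 0 1 * (M 1 0 * M 2 2 * M 3 3 - M 1 0 * M 2 3 * M 3 2 - M 1 2 * M 2 0 * M 3 3
        + M 1 2 * M 2 3 * M 3 0 + M 1 3 * M 2 0 * M 3 2 - M 1 3 * M 2 2 * M 3 0)
      + M 0 2 * (M 1 0 * M 2 1 * M 3 3 - M 1 0 * M 2 3 * M 3 1 - M 1 1 * M 2 0 * M 3 3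
        + M 1 1 * M 2 3 * M 3 0 + M 1 3 * M 2 0 * M 3 1 - M 1 3 * M 2 1 * M 3 0)
      - M 0 3 * (M 1 0 * M 2 1 * M 3 2 - M 1 0 * M 2 2 * M 3 1 - M 1 1 * M 2 0 * M 3 2
        + M 1 1 * M 2 2 * M 3 0 + M 1 2 * M 2 0 * M 3 1 - M 1 2 * M 2 1 * M 3 0) := by
  rw [Matrix.det_succ_row_zero]
  simp [Fin.sum_univ_succ, Matrix.det_fin_three]
  simp only [show Fin.succAbove (1 : Fin 4) 2 = 3 from rfl, show Fin.succAbove (2 : Fin 4) 2 = 3 from rfl,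
    show Fin.succAbove (3 : Fin 4) 2 = 2 from rfl]
  ring

open MvPolynomial in
/-- The multiplication-by-`zw` operator on the deformed bidouble cover
`B = A[z,w]/(z² - v - aw, w² - u - bz)`, a free `A`-module with basis `1, z, w, zw`,
is represented by the matrix `M_{zw}` with rows `(0, au, bv, uv)`, `(0, ab, u, bv)`,
`(0, v, ab, au)`, `(1, 0, 0, ab)` (columns give the images of the basis vectors),
and `4⁴·det(M_{zw} - (ab/4)·Id) = -16²·(-u²v² - (9/8)uv(ab)² + b²v³ + a²u³ + (27/256)a⁴b⁴)`. -/
theorem mult_zw_matrix_and_discriminant (A : Type*) [CommRing A] [Invertible (2 : A)]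
    (u v a b : A) :
    letI z : MvPolynomial (Fin 2) A := X 0
    letI w : MvPolynomial (Fin 2) A := X 1
    letI I : Ideal (MvPolynomial (Fin 2) A) :=
      Ideal.span {z ^ 2 - C v - C a * w, w ^ 2 - C u - C b * z}
    letI π := Ideal.Quotient.mk I
    letI e : Fin 4 → MvPolynomial (Fin 2) A ⧸ I := ![1, π z, π w, π (z * w)]
    letI M : Matrix (Fin 4) (Fin 4) A :=
      !![0, a*u, b*v, u*v;
         0, a*b, u,   b*v;
         0, v,   a*b, a*u;
         1, 0,   0,   a*b]
    letI i2 : A := ⅟(2 : A)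
    (∀ j : Fin 4, π (z * w) * e j = ∑ i : Fin 4, (algebraMap A _ (M i j)) * e i) ∧
    (4 : A)^4 * (M - (a * b * i2^2) • (1 : Matrix (Fin 4) (Fin 4) A)).det
      = -(16 : A)^2 * (-(u^2 * v^2) - 9 * i2^3 * (u * v * (a*b)^2)
          + b^2 * v^3 + a^2 * u^3 + 27 * i2^8 * (a^4 * b^4)) := by
  set z : MvPolynomial (Fin 2) A := X 0 with hz
  set w : MvPolynomial (Fin 2) A := X 1 with hw
  set I : Ideal (MvPolynomial (Fin 2) A) :=
      Ideal.span {z ^ 2 - C v - C a * w, w ^ 2 - C u - C b * z} with hI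
  set π := Ideal.Quotient.mk I with hπ
  constructor
  · have halg : ∀ x : A, algebraMap A (MvPolynomial (Fin 2) A ⧸ I) x = π (C x) := fun x => rfl
    intro j
    fin_cases j
    · simp [Fin.sum_univ_four]
    · simp [Fin.sum_univ_four]
      simp only [halg, ← map_mul, ← map_add]
      rw [hπ, Ideal.Quotient.eq]
      exact Ideal.mem_span_pair.mpr ⟨w, C a, by simp only [map_mul]; ring⟩
    · simp [Fin.sum_univ_four]
      simp only [halg, ← map_mul, ← map_add]
      rw [hπ, Ideal.Quotient.eq]
      exact Ideal.mem_span_pair.mpr ⟨C b, z, by simp only [map_mul]; ring⟩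
    · simp [Fin.sum_univ_four]
      simp only [halg, ← map_mul, ← map_add]
      rw [hπ, Ideal.Quotient.eq]
      exact Ideal.mem_span_pair.mpr ⟨w ^ 2, C v + C a * w, by simp only [map_mul]; ring⟩
  · have h2 : (2 : A) * ⅟(2 : A) = 1 := mul_invOf_self 2
    set i2 : A := ⅟(2 : A) with hi2
    rw [det_fin_four']
    simp [Matrix.sub_apply, Matrix.smul_apply, Matrix.one_apply, smul_eq_mul]
    linear_combination ((256:A)*a^4*b^4*i2^2 + (512:A)*a^4*b^4*i2^3 + (256:A)*a^4*b^4*i2^4 +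
      (512:A)*a^4*b^4*i2^5 + (1792:A)*a^4*b^4*i2^6 + (3584:A)*a^4*b^4*i2^7 +
      (-256:A)*u*v*a^2*b^2 + (-512:A)*u*v*a^2*b^2*i2 + (-1280:A)*u*v*a^2*b^2*i2^2 +
      (-256:A)*u*v*a^2*b^2*i2^3) * h2
end

section
/- The map G(s,w) = (16sw², w² - 4sw, s - w) from 𝔸² to 𝔸³ has Jacobian matrix of rank exactly 1 at a point (s,w) if and only if w + 2s = 0, and at such points the kernel of the Jacobian is spanned by the vector (1,1). -/
/-- The Jacobian matrix of `G(s,w) = (16sw², w² - 4sw, s - w)` has rank exactly 1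
at `(s,w)` iff `w + 2s = 0`, and at such points its kernel is spanned by `(1,1)`. -/
theorem jacobian_rank_one_locus (s w : ℂ) :
    letI J : Matrix (Fin 3) (Fin 2) ℂ :=
      !![16 * w ^ 2, 32 * s * w;
         -4 * w, 2 * w - 4 * s;
         1, -1];
    (J.rank = 1 ↔ w + 2 * s = 0) ∧
      (w + 2 * s = 0 →
        LinearMap.ker J.mulVecLin = Submodule.span ℂ {![1, 1]}) := by
  set J : Matrix (Fin 3) (Fin 2) ℂ :=
      !![16 * w ^ 2, 32 * s * w;
         -4 * w, 2 * w - 4 * s;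
         1, -1] with hJ
  have hmem : ∀ v : Fin 2 → ℂ, v ∈ LinearMap.ker J.mulVecLin ↔
      (16 * w ^ 2 * v 0 + 32 * s * w * v 1 = 0 ∧
       -4 * w * v 0 + (2 * w - 4 * s) * v 1 = 0 ∧
       v 0 - v 1 = 0) := by
    intro v
    rw [LinearMap.mem_ker]
    simp only [hJ, Matrix.mulVecLin_apply, funext_iff, Fin.forall_fin_succ,
      Matrix.mulVec, dotProduct, Fin.sum_univ_two, Fin.isValue]
    simp [Matrix.cons_val_succ]
    intro _ _
    rw [sub_eq_add_neg]
  have hone : (![1, 1] : Fin 2 → ℂ) ≠ 0 := by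
    intro h
    have := congrFun h 0
    simp at this
  -- kernel when w + 2s = 0
  have hker : w + 2 * s = 0 → LinearMap.ker J.mulVecLin = Submodule.span ℂ {![1, 1]} := by
    intro h
    apply le_antisymm
    · intro v hv
      rw [hmem] at hv
      have h3 : v 0 = v 1 := by linear_combination hv.2.2
      have hv' : v = v 0 • ![1, 1] := by
        funext i
        fin_cases i <;> simp [h3]
      rw [hv']
      exact Submodule.smul_mem _ _ (Submodule.mem_span_singleton_self _)
    · rw [Submodule.span_le, Set.singleton_subset_iff, SetLike.mem_coe, hmem]
      refine ⟨?_, ?_, ?_⟩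
      · simp only [Matrix.cons_val_zero, Matrix.cons_val_one, Matrix.head_cons]
        linear_combination 16 * w * h
      · simp only [Matrix.cons_val_zero, Matrix.cons_val_one, Matrix.head_cons]
        linear_combination -2 * h
      · simp
  -- kernel trivial when w + 2s ≠ 0
  have hker0 : w + 2 * s ≠ 0 → LinearMap.ker J.mulVecLin = ⊥ := by
    intro h
    rw [Submodule.eq_bot_iff]
    intro v hv
    rw [hmem] at hv
    obtain ⟨h1, h2, h3⟩ := hv
    have hv0 : (-2) * (w + 2 * s) * v 0 = 0 := by linear_combination h2 + (2 * w - 4 * s) * h3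
    have h0 : v 0 = 0 := by
      rcases mul_eq_zero.mp hv0 with h' | h'
      · exact absurd h' (by simpa using h)
      · exact h'
    funext i
    fin_cases i
    · exact h0
    · simpa [h0] using h3.symm
  -- rank + nullity
  have hrn : J.rank + Module.finrank ℂ (LinearMap.ker J.mulVecLin) = 2 := by
    rw [Matrix.rank]
    rw [LinearMap.finrank_range_add_finrank_ker J.mulVecLin]
    simp [Module.finrank_fintype_fun_eq_card]
  constructor
  · constructor
    · intro hr
      by_contra h
      rw [hker0 h] at hrn
      simp [hr] at hrn
    · intro h
      rw [hker h, finrank_span_singleton hone] at hrn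
      omega
  · exact hker
end

section
/- The curve δ(u,v) = -u²v² - (9/8)uv + v³ + u³ + 27/256 = 0 in ℂ² does not pass through the origin, and its singular points (points where δ = ∂δ/∂u = ∂δ/∂v = 0) are exactly the three points (u,v) = ((3/4)ζ², (3/4)ζ) where ζ ranges over the cube roots of unity. -/
/-- The curve `δ(u,v) = -u²v² - (9/8)uv + v³ + u³ + 27/256 = 0` does not pass
through the origin, and its singular points are exactly the three points
`(u,v) = ((3/4)ζ², (3/4)ζ)` with `ζ³ = 1`. -/
theorem delta_singular_points :
    letI δ : ℂ → ℂ → ℂ := fun u v =>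
      -(u ^ 2 * v ^ 2) - (9/8) * u * v + v ^ 3 + u ^ 3 + 27/256;
    letI δu : ℂ → ℂ → ℂ := fun u v => -(2 * u * v ^ 2) - (9/8) * v + 3 * u ^ 2;
    letI δv : ℂ → ℂ → ℂ := fun u v => -(2 * u ^ 2 * v) - (9/8) * u + 3 * v ^ 2;
    δ 0 0 ≠ 0 ∧
      {p : ℂ × ℂ | δ p.1 p.2 = 0 ∧ δu p.1 p.2 = 0 ∧ δv p.1 p.2 = 0}
        = {p : ℂ × ℂ | ∃ ζ : ℂ, ζ ^ 3 = 1 ∧ p.1 = (3/4) * ζ ^ 2 ∧ p.2 = (3/4) * ζ} := by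
  refine ⟨by norm_num, ?_⟩
  ext p
  simp only [Set.mem_setOf_eq]
  constructor
  · rintro ⟨h1, h2, h3⟩
    have hsq : (p.1 * p.2 - 9/16) ^ 2 = 0 := by
      linear_combination 3 * h1 - p.1 * h2 - p.2 * h3
    have huv : p.1 * p.2 = 9/16 := by
      have h := pow_eq_zero_iff (n := 2) (by norm_num) |>.mp hsq
      linear_combination h
    have hv2 : 3 * p.2 ^ 2 = 9/4 * p.1 := by linear_combination h3 + 2 * p.1 * huv
    have hv3 : p.2 ^ 3 = 27/64 := by linear_combination (p.2/3) * hv2 + (3/4) * huv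
    refine ⟨4/3 * p.2, by linear_combination (64/27) * hv3, ?_, by ring⟩
    linear_combination (-(4/9)) * hv2
  · rintro ⟨ζ, hz, hu, hv⟩
    rw [hu, hv]
    refine ⟨?_, ?_, ?_⟩
    · linear_combination (27/256 * ζ ^ 3 - 27/256) * hz
    · linear_combination (27/32 * ζ) * hz
    · linear_combination (-(27/32) * ζ ^ 2) * hz
end

section
/- The group with presentation ⟨α₁, α₂ | α₁α₂α₁ = α₂α₁α₂, α₂α₁α₁α₂ = 1⟩ admits a surjective homomorphism onto the symmetric group S₃ sending α₁ and α₂ to transpositions; in particular this group (the spherical braid group of three points on ℙ¹) is nonabelian. -/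
private abbrev sS : Equiv.Perm (Fin 3) := Equiv.swap 0 1
private abbrev tS : Equiv.Perm (Fin 3) := Equiv.swap 1 2
private abbrev fS : Fin 2 → Equiv.Perm (Fin 3) := ![sS, tS]

/-- The group `⟨α₁, α₂ | α₁α₂α₁ = α₂α₁α₂, α₂α₁α₁α₂ = 1⟩` (the fundamental group of
the complement of a three-cuspidal quartic in `ℙ²`) admits a surjective homomorphism
onto `S₃` sending the generators to transpositions; in particular it is nonabelian. -/
theorem pi1_complement_surjects_onto_S3 :
    letI a : Fin 2 → FreeGroup (Fin 2) := fun i => FreeGroup.of i;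
    letI rels : Set (FreeGroup (Fin 2)) :=
      {a 0 * a 1 * a 0 * (a 1 * a 0 * a 1)⁻¹, a 1 * a 0 * a 0 * a 1};
    ∃ φ : PresentedGroup rels →* Equiv.Perm (Fin 3),
      Function.Surjective φ ∧
        (φ (PresentedGroup.of 0)).IsSwap ∧ (φ (PresentedGroup.of 1)).IsSwap ∧
        ∃ g h : PresentedGroup rels, g * h ≠ h * g := by
  have hrels : ∀ r ∈ ({FreeGroup.of 0 * FreeGroup.of 1 * FreeGroup.of 0 *
      (FreeGroup.of 1 * FreeGroup.of 0 * FreeGroup.of 1)⁻¹,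
      FreeGroup.of 1 * FreeGroup.of 0 * FreeGroup.of 0 * FreeGroup.of 1} :
      Set (FreeGroup (Fin 2))), FreeGroup.lift fS r = 1 := by
    intro r hr
    rcases hr with h | h <;> subst h <;> simp <;> decide
  refine ⟨PresentedGroup.toGroup hrels, ?_, ?_, ?_, ?_⟩
  · intro σ
    have key : ∀ τ : Equiv.Perm (Fin 3),
        τ = 1 ∨ τ = sS ∨ τ = tS ∨ τ = sS * tS ∨ τ = tS * sS ∨ τ = sS * tS * sS := by
      decide
    have h0 : PresentedGroup.toGroup hrels (PresentedGroup.of 0) = sS :=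
      PresentedGroup.toGroup.of hrels
    have h1 : PresentedGroup.toGroup hrels (PresentedGroup.of 1) = tS :=
      PresentedGroup.toGroup.of hrels
    rcases key σ with h | h | h | h | h | h
    · exact ⟨1, by simp [h]⟩
    · exact ⟨PresentedGroup.of 0, by simp [h0, h]⟩
    · exact ⟨PresentedGroup.of 1, by simp [h1, h]⟩
    · exact ⟨PresentedGroup.of 0 * PresentedGroup.of 1, by simp [h0, h1, h]⟩
    · exact ⟨PresentedGroup.of 1 * PresentedGroup.of 0, by simp [h0, h1, h]⟩
    · exact ⟨PresentedGroup.of 0 * PresentedGroup.of 1 * PresentedGroup.of 0,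
        by simp [h0, h1, h]⟩
  · rw [PresentedGroup.toGroup.of hrels]
    exact ⟨0, 1, by decide, rfl⟩
  · rw [PresentedGroup.toGroup.of hrels]
    exact ⟨1, 2, by decide, rfl⟩
  · refine ⟨PresentedGroup.of 0, PresentedGroup.of 1, fun hcomm => ?_⟩
    have := congrArg (PresentedGroup.toGroup hrels) hcomm
    simp only [map_mul, PresentedGroup.toGroup.of] at this
    exact absurd this (by decide)
end

section
/- There is a homomorphism from the group G = ⟨α₁, α₂, β₂, β₁ | α₁α₂α₁ = α₂α₁α₂, β₁β₂β₁ = β₂β₁β₂, α₂β₂α₂ = β₂α₂β₂, β₂β₁ = α₁β₂⟩ to S₄ sending α₁ ↦ (1 2), α₂ ↦ (2 3), β₂ ↦ (2 4), β₁ ↦ (1 4), and this homomorphism is surjective. -/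
private def fS4 : Fin 4 → Equiv.Perm (Fin 4)
  | 0 => Equiv.swap 0 1
  | 1 => Equiv.swap 1 2
  | 2 => Equiv.swap 1 3
  | 3 => Equiv.swap 0 3

/-- The group `G = ⟨α₁, α₂, β₂, β₁ | α₁α₂α₁ = α₂α₁α₂, β₁β₂β₁ = β₂β₁β₂,
α₂β₂α₂ = β₂α₂β₂, β₂β₁ = α₁β₂⟩` (the fundamental group `π₁(ℂ² − C)` for the
three-cuspidal quartic) admits a surjective homomorphism to `S₄` with
`α₁ ↦ (1 2)`, `α₂ ↦ (2 3)`, `β₂ ↦ (2 4)`, `β₁ ↦ (1 4)`.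
Generators: `0 = α₁`, `1 = α₂`, `2 = β₂`, `3 = β₁`; points of `S₄` are `0,1,2,3`. -/
theorem pi1_affine_complement_to_S4 :
    letI g : Fin 4 → FreeGroup (Fin 4) := fun i => FreeGroup.of i;
    letI rels : Set (FreeGroup (Fin 4)) :=
      {g 0 * g 1 * g 0 * (g 1 * g 0 * g 1)⁻¹,
       g 3 * g 2 * g 3 * (g 2 * g 3 * g 2)⁻¹,
       g 1 * g 2 * g 1 * (g 2 * g 1 * g 2)⁻¹,
       g 2 * g 3 * (g 0 * g 2)⁻¹};
    ∃ φ : PresentedGroup rels →* Equiv.Perm (Fin 4),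
      φ (PresentedGroup.of 0) = Equiv.swap 0 1 ∧
      φ (PresentedGroup.of 1) = Equiv.swap 1 2 ∧
      φ (PresentedGroup.of 2) = Equiv.swap 1 3 ∧
      φ (PresentedGroup.of 3) = Equiv.swap 0 3 ∧
      Function.Surjective φ := by
  have hrels : ∀ r ∈ ({FreeGroup.of 0 * FreeGroup.of 1 * FreeGroup.of 0 *
        (FreeGroup.of 1 * FreeGroup.of 0 * FreeGroup.of 1)⁻¹,
       FreeGroup.of 3 * FreeGroup.of 2 * FreeGroup.of 3 *
        (FreeGroup.of 2 * FreeGroup.of 3 * FreeGroup.of 2)⁻¹,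
       FreeGroup.of 1 * FreeGroup.of 2 * FreeGroup.of 1 *
        (FreeGroup.of 2 * FreeGroup.of 1 * FreeGroup.of 2)⁻¹,
       FreeGroup.of 2 * FreeGroup.of 3 * (FreeGroup.of 0 * FreeGroup.of 2)⁻¹} :
        Set (FreeGroup (Fin 4))), FreeGroup.lift fS4 r = 1 := by
    intro r hr
    rcases hr with h | h | h | h <;> subst h <;>
      simp [fS4] <;> decide
  refine ⟨PresentedGroup.toGroup hrels, ?_, ?_, ?_, ?_, ?_⟩
  · exact PresentedGroup.toGroup.of hrels
  · exact PresentedGroup.toGroup.of hrels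
  · exact PresentedGroup.toGroup.of hrels
  · exact PresentedGroup.toGroup.of hrels
  · set φ := PresentedGroup.toGroup hrels with hφ
    have hmem : ∀ i, fS4 i ∈ φ.range := fun i =>
      ⟨PresentedGroup.of i, PresentedGroup.toGroup.of hrels⟩
    rw [← MonoidHom.range_eq_top, eq_top_iff, ← Equiv.Perm.closure_isSwap,
      Subgroup.closure_le]
    rintro σ ⟨x, y, -, rfl⟩
    have p01 := hmem 0; have p12 := hmem 1; have p13 := hmem 2; have p03 := hmem 3
    have p02 := mul_mem (mul_mem p12 p01) p12
    have p23 := mul_mem (mul_mem p13 p12) p13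
    have e02 : fS4 1 * fS4 0 * fS4 1 = Equiv.swap 0 2 := by decide
    have e23 : fS4 2 * fS4 1 * fS4 2 = Equiv.swap 2 3 := by decide
    clear_value φ
    fin_cases x <;> fin_cases y <;>
    first
    | (rw [Equiv.swap_self]; exact one_mem _)
    | exact p01
    | exact p12
    | exact p13
    | exact p03
    | exact e02 ▸ p02
    | exact e23 ▸ p23
    | (rw [Equiv.swap_comm]
       first
       | exact p01
       | exact p12
       | exact p13
       | exact p03
       | exact e02 ▸ p02
       | exact e23 ▸ p23)
end
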